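/- Let Ω ⊂ ℝⁿ be bounded measurable with diam(Ω) ≤ 1, p ∈ [1,∞), h ∈ (0,1/2], and v ∈ L^p(Ω) extended by zero. With σ_z(x) = h/(|x−z|+h) and s = n/p, one has ∫_Ω ‖σ_z^{n/p} v‖_{L^p(Ω)}^p dz ≤ C(n) |log h| h^n ‖v‖_{L^p(Ω)}^p. -/

import Mathlib

/-!
Since `(σ^(n/p))^p = σ^n`, Fubini reduces the estimate to the kernel bound
`∫_Ω σ_z(x)^n dz ≤ C h^n |log h|` for each `x ∈ Ω`. As `diam Ω ≤ 1`, `Ω ⊆ B(x, 1)`, and polar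
coordinates give
`∫_{B(x,1)} σ_z(x)^n dz = n ω_n ∫_0^1 r^(n-1) h^n / (r + h)^n dr ≤ n ω_n h^n ∫_0^1 dr / (r + h)
  = n ω_n h^n log((1 + h) / h) ≤ 2 n ω_n h^n |log h|`.
-/

open MeasureTheory Real Metric Set

theorem pow_sub_one_mul_div_add_pow_le {d : ℕ} (hd : 1 ≤ d) {h y : ℝ} (hh : 0 < h) (hy : 0 ≤ y) :
    y ^ (d - 1) * (h / (y + h)) ^ d ≤ h ^ d * (y + h)⁻¹ := by
  have hyh : 0 < y + h := by positivity
  have hsplit : (y + h) ^ d = (y + h) ^ (d - 1) * (y + h) := by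
    rw [← pow_succ, Nat.sub_add_cancel hd]
  rw [div_pow, hsplit, mul_div_assoc', div_le_iff₀ (by positivity)]
  calc y ^ (d - 1) * h ^ d ≤ (y + h) ^ (d - 1) * h ^ d := by gcongr; linarith
    _ = _ := by field_simp

theorem setIntegral_Ioc_pow_sub_one_mul_kernel_le {d : ℕ} (hd : 1 ≤ d) {h : ℝ} (hh : 0 < h) :
    ∫ y in Ioc 0 1, y ^ (d - 1) * (h / (y + h)) ^ d ≤ h ^ d * log ((1 + h) / h) := by
  have hint : IntegrableOn (fun y : ℝ => h ^ d * (y + h)⁻¹) (Ioc 0 1) := by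
    refine (ContinuousOn.integrableOn_Icc ?_).mono_set Ioc_subset_Icc_self
    exact continuousOn_const.mul ((continuousOn_id.add continuousOn_const).inv₀
      fun y hy => (add_pos_of_nonneg_of_pos hy.1 hh).ne')
  calc ∫ y in Ioc 0 1, y ^ (d - 1) * (h / (y + h)) ^ d
      ≤ ∫ y in Ioc 0 1, h ^ d * (y + h)⁻¹ := by
        refine integral_mono_of_nonneg ?_ hint ?_
        · filter_upwards [ae_restrict_mem measurableSet_Ioc] with y hy
          have := hy.1; positivity
        · filter_upwards [ae_restrict_mem measurableSet_Ioc] with y hy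
          exact pow_sub_one_mul_div_add_pow_le hd hh hy.1.le
    _ = h ^ d * log ((1 + h) / h) := by
        rw [integral_const_mul, ← intervalIntegral.integral_of_le zero_le_one,
          intervalIntegral.integral_comp_add_right (fun y => y⁻¹), zero_add,
          integral_inv_of_pos hh (by linarith)]

theorem log_one_add_div_self_le {h : ℝ} (hh : 0 < h) (hh2 : h ≤ 1 / 2) :
    log ((1 + h) / h) ≤ 2 * |log h| := by
  have hlog : |log h| = -log h := abs_of_neg (log_neg hh (by linarith))
  calc log ((1 + h) / h) ≤ log ((h ^ 2)⁻¹) := by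
        gcongr
        rw [div_le_iff₀ hh]; field_simp; nlinarith
    _ = 2 * |log h| := by rw [log_inv, log_pow, hlog]; push_cast; ring

section Polar
variable {E F : Type*} [NormedAddCommGroup E] [NormedSpace ℝ E] [FiniteDimensional ℝ E]
  [MeasurableSpace E] [BorelSpace E] [Nontrivial E] [NormedAddCommGroup F] [NormedSpace ℝ F]
  (μ : Measure E) [μ.IsAddHaarMeasure]

theorem integral_closedBall_fun_norm_sub (f : ℝ → F) (x : E) (r : ℝ) :
    ∫ z in closedBall x r, f ‖x - z‖ ∂μ =
      Module.finrank ℝ E • μ.real (ball 0 1) •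
        ∫ y in Ioc 0 r, y ^ (Module.finrank ℝ E - 1) • f y := by
  have hball : closedBall x r = (fun z => ‖x - z‖) ⁻¹' Iic r := by
    ext z; rw [mem_closedBall, dist_comm, dist_eq_norm]; rfl
  calc ∫ z in closedBall x r, f ‖x - z‖ ∂μ
      = ∫ z, (Iic r).indicator f ‖x - z‖ ∂μ := by
        rw [← integral_indicator measurableSet_closedBall, hball]
        exact congrArg _ (funext fun z => indicator_comp_right (fun z => ‖x - z‖))
    _ = ∫ z, (Iic r).indicator f ‖z‖ ∂μ :=
        integral_sub_left_eq_self (fun z => (Iic r).indicator f ‖z‖) μ x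
    _ = _ := by
        rw [integral_fun_norm_addHaar, ← indicator_smul, setIntegral_indicator measurableSet_Iic,
          Ioi_inter_Iic]

theorem integral_closedBall_kernel_le (x : E) {h : ℝ} (hh : 0 < h) :
    ∫ z in closedBall x 1, (h / (‖x - z‖ + h)) ^ Module.finrank ℝ E ∂μ ≤
      Module.finrank ℝ E * μ.real (ball 0 1) * (h ^ Module.finrank ℝ E * log ((1 + h) / h)) := by
  rw [integral_closedBall_fun_norm_sub μ (fun r => (h / (r + h)) ^ Module.finrank ℝ E),
    nsmul_eq_mul, smul_eq_mul, ← mul_assoc]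
  simp only [smul_eq_mul]
  gcongr
  exact setIntegral_Ioc_pow_sub_one_mul_kernel_le Module.finrank_pos hh

end Polar

theorem log_two_le_abs_log {h : ℝ} (hh : 0 < h) (hh2 : h ≤ 1 / 2) : log 2 ≤ |log h| := by
  rw [abs_of_neg (log_neg hh (by linarith)), ← log_inv]
  exact log_le_log (by norm_num) (by rw [le_inv_comm₀ (by norm_num) hh]; linarith)

section Kernel
variable {E : Type*} [NormedAddCommGroup E] [NormedSpace ℝ E] [FiniteDimensional ℝ E]
  [MeasurableSpace E] [BorelSpace E] (μ : Measure E) [μ.IsAddHaarMeasure]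

/-- The summand `(log 2)⁻¹` of the constant covers the zero-dimensional case, where polar
coordinates are unavailable. -/
theorem setIntegral_kernel_le {x : E} {Ω : Set E} (hΩ : Ω ⊆ closedBall x 1) {h : ℝ} (hh : 0 < h)
    (hh2 : h ≤ 1 / 2) :
    ∫ z in Ω, (h / (‖x - z‖ + h)) ^ Module.finrank ℝ E ∂μ ≤
      μ.real (ball 0 1) * (2 * Module.finrank ℝ E + (log 2)⁻¹) * |log h| *
        h ^ Module.finrank ℝ E := by
  set d := Module.finrank ℝ E
  have hlog2 := log_two_le_abs_log hh hh2
  rcases subsingleton_or_nontrivial E with hE | hE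
  · have hd : d = 0 := Module.finrank_zero_of_subsingleton
    have hball : Ω ⊆ ball 0 1 := fun z _ => by simp [Subsingleton.elim z 0]
    simp only [hd, pow_zero, setIntegral_const, smul_eq_mul, mul_one, CharP.cast_eq_zero,
      mul_zero, zero_add]
    calc μ.real Ω ≤ μ.real (ball 0 1) := measureReal_mono hball measure_ball_lt_top.ne
      _ ≤ μ.real (ball 0 1) * ((log 2)⁻¹ * |log h|) := by
        refine le_mul_of_one_le_right measureReal_nonneg ?_
        rwa [inv_mul_eq_div, one_le_div (log_pos one_lt_two)]
      _ = μ.real (ball 0 1) * (log 2)⁻¹ * |log h| := by ring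
  · have hint : IntegrableOn (fun z => (h / (‖x - z‖ + h)) ^ d) (closedBall x 1) μ := by
      refine ContinuousOn.integrableOn_compact (isCompact_closedBall x 1) ?_
      exact (continuousOn_const.div (by fun_prop) fun z _ => by positivity).pow d
    calc ∫ z in Ω, (h / (‖x - z‖ + h)) ^ d ∂μ
        ≤ ∫ z in closedBall x 1, (h / (‖x - z‖ + h)) ^ d ∂μ :=
          setIntegral_mono_set hint (.of_forall fun z => by positivity) (.of_forall hΩ)
      _ ≤ d * μ.real (ball 0 1) * (h ^ d * log ((1 + h) / h)) :=
          integral_closedBall_kernel_le μ x hh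
      _ ≤ d * μ.real (ball 0 1) * (h ^ d * (2 * |log h|)) := by
          gcongr; exact log_one_add_div_self_le hh hh2
      _ ≤ _ := by
          have : 0 ≤ (log 2)⁻¹ * |log h| * h ^ d := by positivity
          nlinarith [measureReal_nonneg (μ := μ) (s := ball 0 1)]

end Kernel

theorem rpow_natCast_div_rpow {a p : ℝ} (ha : 0 ≤ a) (hp : p ≠ 0) (n : ℕ) :
    (a ^ ((n : ℝ) / p)) ^ p = a ^ n := by
  rw [← rpow_mul ha, div_mul_cancel₀ _ hp, rpow_natCast]

theorem integral_integral_mul_le_of_integral_le {α β : Type*} [MeasurableSpace α]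
    [MeasurableSpace β] {μ : Measure α} {ν : Measure β} [SFinite μ] [IsFiniteMeasure ν]
    {K : β → α → ℝ} {w : α → ℝ} {M B : ℝ} (hK : AEStronglyMeasurable (Function.uncurry K) (ν.prod μ))
    (hK0 : ∀ z x, 0 ≤ K z x) (hKM : ∀ z x, K z x ≤ M) (hKB : ∀ᵐ x ∂μ, ∫ z, K z x ∂ν ≤ B)
    (hw : Integrable w μ) (hw0 : ∀ x, 0 ≤ w x) :
    ∫ z, ∫ x, K z x * w x ∂μ ∂ν ≤ B * ∫ x, w x ∂μ := by
  have hint : Integrable (Function.uncurry fun z x => K z x * w x) (ν.prod μ) := by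
    refine ((integrable_const M).mul_prod hw).mono' (hK.mul hw.1.comp_snd) (.of_forall fun ⟨z, x⟩ => ?_)
    rw [Function.uncurry_apply_pair, Real.norm_eq_abs, abs_of_nonneg (mul_nonneg (hK0 _ _) (hw0 _))]
    exact mul_le_mul_of_nonneg_right (hKM _ _) (hw0 _)
  rw [integral_integral_swap hint, ← integral_const_mul]
  refine integral_mono_of_nonneg (.of_forall fun x => ?_) (hw.const_mul B) ?_
  · exact integral_nonneg fun z => mul_nonneg (hK0 z x) (hw0 x)
  · filter_upwards [hKB] with x hx
    rw [integral_mul_const]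
    exact mul_le_mul_of_nonneg_right hx (hw0 x)

theorem stmt6 (n : ℕ) :
    ∃ C > (0:ℝ), ∀ (Ω : Set (EuclideanSpace ℝ (Fin n))), MeasurableSet Ω →
      Bornology.IsBounded Ω → EMetric.diam Ω ≤ 1 →
      ∀ p h : ℝ, 1 ≤ p → 0 < h → h ≤ 1/2 →
      ∀ v : EuclideanSpace ℝ (Fin n) → ℝ, (∀ x ∉ Ω, v x = 0) →
        MemLp v (ENNReal.ofReal p) (volume.restrict Ω) →
        (∫ z in Ω, ∫ x in Ω, ((h / (‖x - z‖ + h)) ^ ((n : ℝ) / p)) ^ p * |v x| ^ p) ≤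
          C * |Real.log h| * h ^ n * ∫ x in Ω, |v x| ^ p := by
  have hball : 0 < volume.real (ball (0 : EuclideanSpace ℝ (Fin n)) 1) :=
    ENNReal.toReal_pos (measure_ball_pos _ _ one_pos).ne' measure_ball_lt_top.ne
  refine ⟨volume.real (ball (0 : EuclideanSpace ℝ (Fin n)) 1) * (2 * n + (log 2)⁻¹),
    by positivity, ?_⟩
  intro Ω hΩ hbdd hdiam p h hp hh hh2 v _ hv
  have hp0 : 0 < p := by linarith
  have : IsFiniteMeasure (volume.restrict Ω) := isFiniteMeasure_restrict.2 hbdd.measure_lt_top.ne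
  have hw : Integrable (fun x => |v x| ^ p) (volume.restrict Ω) := by
    simpa [ENNReal.toReal_ofReal hp0.le] using
      hv.integrable_norm_rpow (by simpa using hp0) ENNReal.ofReal_ne_top
  have hΩ_sub : ∀ x ∈ Ω, Ω ⊆ closedBall x 1 := fun x hx z hz => by
    have := (edist_le_ediam_of_mem hz hx).trans hdiam
    rwa [edist_dist, ENNReal.ofReal_le_one] at this
  have hkernel : ∀ z x : EuclideanSpace ℝ (Fin n),
      ((h / (‖x - z‖ + h)) ^ ((n : ℝ) / p)) ^ p = (h / (‖x - z‖ + h)) ^ n := fun z x =>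
    rpow_natCast_div_rpow (by positivity) hp0.ne' n
  simp_rw [hkernel]
  refine integral_integral_mul_le_of_integral_le (M := 1) ?_ (fun _ _ => by positivity) ?_ ?_ hw
    (fun _ => by positivity)
  · exact (Continuous.pow (continuous_const.div (by fun_prop) fun q => by positivity) n)
      |>.aestronglyMeasurable
  · exact fun z x => pow_le_one₀ (by positivity) ((div_le_one (by positivity)).2 (by simp))
  · filter_upwards [ae_restrict_mem hΩ] with x hx
    simpa using setIntegral_kernel_le volume (hΩ_sub x hx) hh hh2
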